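/- arXiv:1108.3381 — 2 statements merged into one kernel-verified Lean document; each statement's English description precedes it below -/
import Mathlib

section
/- A left R-module M is supplemented (every submodule has a supplement) if and only if for every submodule X of M there exists a submodule Y of M such that X + Y = M, X ∩ Y ⊆ Rad(Y), and X ∩ Y is PSD in Y. -/
open Submodule Function

/-- A submodule `N` of `M` is PSD in `M` if whenever `N + X = M`, there is a
projective direct summand `S` of `M` with `S ≤ N` and `M = S ⊕ X`. -/
def IsPSD (R : Type*) [Ring R] {M : Type*} [AddCommGroup M] [Module R M]
    (N : Submodule R M) : Prop :=
  ∀ X : Submodule R M, N ⊔ X = ⊤ →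
    ∃ S : Submodule R M, S ≤ N ∧ Module.Projective R ↥S ∧ IsCompl S X

/-- `N` is small in `M`: `N + L = M` implies `L = M`. -/
def IsSmallSub (R : Type*) [Ring R] {M : Type*} [AddCommGroup M] [Module R M]
    (N : Submodule R M) : Prop :=
  ∀ L : Submodule R M, N ⊔ L = ⊤ → L = ⊤

/-- The (Jacobson) radical of a module: intersection of all maximal submodules. -/
def radM (R M : Type*) [Ring R] [AddCommGroup M] [Module R M] : Submodule R M :=
  sInf {m : Submodule R M | IsCoatom m}

/-- `M` is supplemented: every submodule `X` has a submodule `Y` with `X + Y = M`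
and `X ∩ Y` small in `Y`. -/
def IsSupplemented (R M : Type*) [Ring R] [AddCommGroup M] [Module R M] : Prop :=
  ∀ X : Submodule R M, ∃ Y : Submodule R M, X ⊔ Y = ⊤ ∧
    IsSmallSub R (Submodule.comap Y.subtype X)

/-- `M` is lifting: every submodule `N` admits a decomposition `M = A ⊕ B` with
`A ≤ N` and `N ∩ B` small in `B`. -/
def IsLifting (R M : Type*) [Ring R] [AddCommGroup M] [Module R M] : Prop :=
  ∀ N : Submodule R M, ∃ A B : Submodule R M, IsCompl A B ∧ A ≤ N ∧
    IsSmallSub R (Submodule.comap B.subtype N)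

/-- `Y` is an `I`-supplement of `X` in `M`: `X + Y = M`, `X ∩ Y ⊆ IY`, and
`X ∩ Y` is PSD in `Y`. -/
def IsISupplementOf {R : Type*} [Ring R] {M : Type*} [AddCommGroup M] [Module R M]
    (I : Ideal R) (Y X : Submodule R M) : Prop :=
  X ⊔ Y = ⊤ ∧ X ⊓ Y ≤ I • Y ∧ IsPSD R (Submodule.comap Y.subtype X)

/-- `M` is `I`-supplemented: every submodule has an `I`-supplement in `M`. -/
def IsISupplemented {R : Type*} [Ring R] (I : Ideal R) (M : Type*)
    [AddCommGroup M] [Module R M] : Prop :=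
  ∀ X : Submodule R M, ∃ Y : Submodule R M, IsISupplementOf I Y X

/-! A small submodule lies in the radical and is trivially PSD (take `S = 0`). Conversely, if
`N ≤ Rad Y` is PSD in `Y` and `N + X = Y`, the projective summand `S ≤ N` with `Y = S ⊕ X`
satisfies `S ≤ Rad Y`, so projecting onto `S` gives `Rad S = S`. By Bass' lemma a projective
module equal to its radical is zero: writing `S` as a summand of a free module, the coordinates
of its elements lie in the Jacobson radical `J` of `R`, and the coordinate vector `a` of any
`x ∈ S` satisfies `a = a C` for a finite matrix `C` over `J`; since `1 - C` is invertible,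
`a = 0`. Hence `S = 0` and `X = Y`, i.e. `N` is small. -/

theorem Ideal.isUnit_one_sub_of_mem_jacobson_bot {R : Type*} [Ring R] {x : R}
    (hx : x ∈ (⊥ : Ideal R).jacobson) : IsUnit (1 - x) := by
  have left_inv : ∀ y ∈ (⊥ : Ideal R).jacobson, ∃ z, z * (1 - y) = 1 := fun y hy => by
    obtain ⟨z, hz⟩ := Ideal.mem_jacobson_iff.1 hy (-1)
    exact ⟨z, by rw [mul_sub, mul_one, sub_eq_neg_add, ← sub_eq_zero]; simpa using hz⟩
  obtain ⟨z, hz⟩ := left_inv x hx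
  -- `z = 1 + z x` is itself of the form `1 - y` with `y ∈ J`, hence left invertible too.
  have hz' : z = 1 - -(z * x) := by rw [sub_neg_eq_add, ← hz, mul_sub, mul_one, sub_add_cancel]
  obtain ⟨w, hw⟩ := left_inv _ (Submodule.neg_mem _ (Ideal.mul_mem_left _ z hx))
  rw [← hz'] at hw
  have hwx : w = 1 - x := by
    calc w = w * (z * (1 - x)) := by rw [hz, mul_one]
      _ = 1 - x := by rw [← mul_assoc, hw, one_mul]
  exact ⟨⟨1 - x, z, hwx ▸ hw, hz⟩, rfl⟩

open Matrix in
theorem Matrix.eq_zero_of_vecMul_eq_self_of_mem_jacobson {R n : Type*} [Ring R] [Fintype n]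
    [DecidableEq n] {C : Matrix n n R} (hC : ∀ i j, C i j ∈ Ring.jacobson R) {v : n → R}
    (hv : v ᵥ* C = v) : v = 0 := by
  have hCJ : C ∈ (⊥ : Ideal (Matrix n n R)).jacobson := by
    rw [← Ideal.matrix_bot n]
    exact Ideal.matrix_jacobson_le (⊥ : Ideal R) (by simpa [Ideal.jacobson_bot] using hC)
  obtain ⟨u, hu⟩ := Ideal.isUnit_one_sub_of_mem_jacobson_bot hCJ
  have hv0 : v ᵥ* (1 - C) = 0 := by rw [vecMul_sub, vecMul_one, hv, sub_self]
  calc v = v ᵥ* (1 - C) ᵥ* ↑u⁻¹ := by rw [vecMul_vecMul, ← hu, Units.mul_inv, vecMul_one]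
    _ = 0 := by rw [hv0, zero_vecMul]

open Matrix in
theorem Module.Projective.subsingleton_of_jacobson_eq_top {R P : Type*} [Ring R]
    [AddCommGroup P] [Module R P] [Module.Projective R P] (h : Module.jacobson R P = ⊤) :
    Subsingleton P := by
  obtain ⟨s, hs⟩ := Module.projective_def.1 ‹Module.Projective R P›
  have hJ : ∀ y a, s y a ∈ Ring.jacobson R := fun y a =>
    Module.le_comap_jacobson ((Finsupp.lapply a).comp s) (h ▸ mem_top : y ∈ Module.jacobson R P)
  suffices h0 : ∀ x : P, x = 0 from ⟨fun x y => (h0 x).trans (h0 y).symm⟩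
  intro x
  classical
  set T := (s x).support
  -- Applying `s` to `x = ∑ i ∈ T, (s x i) • i` gives `s x j = ∑ i ∈ T, s x i * s i j`.
  have hfix : (fun j : T => s x j) ᵥ* Matrix.of (fun i j : T => s i j) = fun j : T => s x j := by
    funext j
    conv_rhs => rw [← hs x, Finsupp.linearCombination_apply, Finsupp.sum, map_sum,
      Finsupp.finsetSum_apply, ← Finset.sum_coe_sort]
    simp [Matrix.vecMul, dotProduct, T]
  have hzero := Matrix.eq_zero_of_vecMul_eq_self_of_mem_jacobson (fun i j => hJ _ _) hfix
  have hsx : s x = 0 := by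
    ext j
    by_cases hj : j ∈ T
    · exact congrFun hzero ⟨j, hj⟩
    · exact Finsupp.notMem_support_iff.1 hj
  rw [← hs x, hsx, map_zero]

theorem Module.jacobson_eq_top_of_isCompl_of_le {R M : Type*} [Ring R] [AddCommGroup M]
    [Module R M] {S T : Submodule R M} (hST : IsCompl S T) (hS : S ≤ Module.jacobson R M) :
    Module.jacobson R S = ⊤ := by
  refine eq_top_iff.2 fun x _ => ?_
  have := Module.le_comap_jacobson (S.projectionOnto T hST) (hS x.2)
  rwa [mem_comap, projectionOnto_apply_left] at this

section SmallAndPSD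

variable {R M : Type*} [Ring R] [AddCommGroup M] [Module R M] {N : Submodule R M}

theorem IsSmallSub.le_radM (h : IsSmallSub R N) : N ≤ radM R M :=
  le_sInf fun _ hm => by_contra fun hNm => hm.1 (h _ (sup_comm N _ ▸ hm.2 _ (left_lt_sup.2 hNm)))

theorem IsSmallSub.isPSD (h : IsSmallSub R N) : IsPSD R N :=
  fun X hX => ⟨⊥, bot_le, inferInstance, h X hX ▸ isCompl_bot_top⟩

theorem IsPSD.isSmallSub_of_le_radM (h : IsPSD R N) (hN : N ≤ radM R M) : IsSmallSub R N := by
  intro X hX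
  obtain ⟨S, hSN, hS, hSX⟩ := h X hX
  have : Subsingleton S :=
    Module.Projective.subsingleton_of_jacobson_eq_top
      (Module.jacobson_eq_top_of_isCompl_of_le hSX (hSN.trans hN))
  exact eq_top_of_bot_isCompl ((Submodule.subsingleton_iff_eq_bot.1 this) ▸ hSX)

end SmallAndPSD

theorem stmt7 {R M : Type*} [Ring R] [AddCommGroup M] [Module R M] :
    IsSupplemented R M ↔
      ∀ X : Submodule R M, ∃ Y : Submodule R M, X ⊔ Y = ⊤ ∧
        Submodule.comap Y.subtype X ≤ radM R ↥Y ∧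
        IsPSD R (Submodule.comap Y.subtype X) := by
  constructor
  · intro h X
    obtain ⟨Y, hXY, hsmall⟩ := h X
    exact ⟨Y, hXY, hsmall.le_radM, hsmall.isPSD⟩
  · intro h X
    obtain ⟨Y, hXY, hrad, hpsd⟩ := h X
    exact ⟨Y, hXY, hpsd.isSmallSub_of_le_radM hrad⟩
end

section
/- Let M be a left R-module, I an ideal of R, and K, L, H submodules of M. If K is an I-supplement of L in M and L is an I-supplement of H in M, then L is an I-supplement of K in M. -/
open Submodule Function

/-! Since `K ∩ L ⊆ IK ⊆ IH + IL` and `H ∩ L ⊆ IL`, the modular law gives `K ∩ L ⊆ IL`.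
For the PSD condition let `(K ∩ L) + X = L`. The PSD property of `L ∩ K` in `K` and then that of
`H ∩ L` in `L` produce projective `S ≤ K ∩ L` and `T ≤ H ∩ L` with `L = (T ⊕ S) ⊕ X`. Thus `L / X`
is projective, so the surjection of `K ∩ L` onto it splits, and the image of a splitting is a
projective complement of `X` inside `K ∩ L`. -/

namespace Submodule

variable {R M : Type*} [Ring R] [AddCommGroup M] [Module R M]

theorem isCompl_iff_map_subtype {p : Submodule R M} {A B : Submodule R p} :
    IsCompl A B ↔ Disjoint (A.map p.subtype) (B.map p.subtype) ∧
      A.map p.subtype ⊔ B.map p.subtype = p := by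
  rw [p.mapIic.isCompl_iff, Set.Iic.isCompl_iff]
  rfl

theorem sup_eq_top_iff_map_subtype {p : Submodule R M} {A B : Submodule R p} :
    A ⊔ B = ⊤ ↔ A.map p.subtype ⊔ B.map p.subtype = p := by
  rw [← map_sup, ← (map_injective_of_injective p.injective_subtype).eq_iff, map_subtype_top]

theorem projective_sup_of_disjoint {S T : Submodule R M} [Module.Projective R S]
    [Module.Projective R T] (h : Disjoint S T) : Module.Projective R ↥(S ⊔ T) := by
  have hinj : Injective (S.subtype.coprod T.subtype) := by
    rw [← LinearMap.ker_eq_bot, LinearMap.ker_coprod_of_disjoint_range, ker_subtype, ker_subtype,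
      prod_bot]
    simpa using h
  exact .of_equiv ((LinearEquiv.ofInjective _ hinj).trans (.ofEq _ _ (sup_eq_range S T).symm))

theorem smul_top_inf_le_smul_of_sup_eq_top (I : Ideal R) {H L : Submodule R M}
    (hHL : H ⊔ L = ⊤) (hHL' : H ⊓ L ≤ I • L) : I • ⊤ ⊓ L ≤ I • L :=
  calc I • ⊤ ⊓ L = (I • L ⊔ I • H) ⊓ L := by rw [← hHL, smul_sup, sup_comm]
    _ = I • L ⊔ I • H ⊓ L := sup_inf_assoc_of_le _ smul_le_right
    _ ≤ I • L ⊔ H ⊓ L := sup_le_sup_left (inf_le_inf_right _ smul_le_right) _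
    _ ≤ I • L := sup_le le_rfl hHL'

theorem exists_projective_isCompl_le_of_sup_eq_top {N W X : Submodule R M}
    [Module.Projective R W] (hWX : IsCompl W X) (hNX : N ⊔ X = ⊤) :
    ∃ S ≤ N, Module.Projective R S ∧ IsCompl S X := by
  set π := W.projectionOnto X hWX
  have hsurj : Surjective (π ∘ₗ N.subtype) := by
    intro w
    obtain ⟨n, hn, x, hx, hnx⟩ := mem_sup.mp (hNX ▸ mem_top : (w : M) ∈ N ⊔ X)
    refine ⟨⟨n, hn⟩, ?_⟩
    show π n = w
    rw [eq_sub_of_add_eq hnx, map_sub,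
      projectionOnto_apply_left, projectionOnto_apply_of_mem_right hWX hx, sub_zero]
  obtain ⟨σ, hσ⟩ := Module.projective_lifting_property _ LinearMap.id hsurj
  set ψ := N.subtype ∘ₗ σ
  have hπψ : π ∘ₗ ψ = LinearMap.id := hσ
  have hψ : Injective ψ := LinearMap.injective_of_comp_eq_id _ _ hπψ
  have hidem : IsIdempotentElem (ψ ∘ₗ π) := by
    rw [IsIdempotentElem, Module.End.mul_eq_comp, LinearMap.comp_assoc,
      ← LinearMap.comp_assoc π, hπψ, LinearMap.id_comp]
  refine ⟨LinearMap.range ψ, ?_, .of_equiv (LinearEquiv.ofInjective ψ hψ), ?_⟩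
  · exact (LinearMap.range_comp_le_range _ _).trans (range_subtype N).le
  · have h := LinearMap.IsIdempotentElem.isCompl hidem
    rwa [LinearMap.range_comp_of_range_eq_top _ (range_projectionOnto hWX),
      LinearMap.ker_comp_of_ker_eq_bot _ (LinearMap.ker_eq_bot.mpr hψ),
      ker_projectionOnto] at h

end Submodule

section PSD

variable {R M : Type*} [Ring R] [AddCommGroup M] [Module R M]

theorem IsPSD.exists_projective_le_inf_of_sup_eq {p N A : Submodule R M}
    (hpsd : IsPSD R (comap p.subtype N)) (hA : A ≤ p) (hsum : p ⊓ N ⊔ A = p) :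
    ∃ S ≤ p ⊓ N, Module.Projective R S ∧ Disjoint S A ∧ S ⊔ A = p := by
  have hA' : map p.subtype (comap p.subtype A) = A := by
    rw [map_comap_subtype, inf_of_le_right hA]
  obtain ⟨S, hSN, hS, hSA⟩ := hpsd (comap p.subtype A)
    (sup_eq_top_iff_map_subtype.mpr (by rwa [map_comap_subtype, hA']))
  rw [isCompl_iff_map_subtype, hA'] at hSA
  refine ⟨map p.subtype S, ?_, .of_equiv (p.equivSubtypeMap S), hSA⟩
  simpa only [map_comap_subtype] using map_mono (f := p.subtype) hSN

theorem exists_projective_compl_of_isPSD {K L H X : Submodule R M}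
    (hpsdK : IsPSD R (comap K.subtype L)) (hHL : H ⊔ L = ⊤) (hpsdL : IsPSD R (comap L.subtype H))
    (hX : X ≤ L) (hLX : L ⊓ K ⊔ X = L) :
    ∃ W : Submodule R M, Module.Projective R W ∧ Disjoint W X ∧ W ⊔ X = L := by
  have hM : K ⊓ L ⊔ (H ⊔ X) = ⊤ := by
    rw [eq_top_iff, ← hHL]
    nth_rw 1 [← hLX]
    rw [inf_comm]
    exact sup_le (le_sup_left.trans le_sup_right)
      (sup_le le_sup_left (le_sup_right.trans le_sup_right))
  have hK : K ⊓ L ⊔ (H ⊔ X) ⊓ K = K := by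
    rw [← sup_inf_assoc_of_le _ inf_le_left, hM, top_inf_eq]
  obtain ⟨S, hSKL, hS, hSdisj, hSsup⟩ :=
    hpsdK.exists_projective_le_inf_of_sup_eq inf_le_right hK
  have hSK : S ≤ K := hSKL.trans inf_le_left
  have hSXL : S ⊔ X ≤ L := sup_le (hSKL.trans inf_le_right) hX
  have hSX : Disjoint S X := disjoint_iff_inf_le.mpr fun x ⟨hxS, hxX⟩ =>
    hSdisj.le_bot ⟨hxS, mem_sup_right hxX, hSK hxS⟩
  have hHX : H ⊔ X ≤ H ⊔ (S ⊔ X) := sup_le le_sup_left (le_sup_right.trans le_sup_right)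
  have hK' : K ≤ H ⊔ (S ⊔ X) := by
    rw [← hSsup]
    exact sup_le (le_sup_left.trans le_sup_right) (inf_le_left.trans hHX)
  have hHSX : H ⊔ (S ⊔ X) = ⊤ := by
    rw [eq_top_iff, ← hM]
    exact sup_le (inf_le_left.trans hK') hHX
  have hL : L ⊓ H ⊔ (S ⊔ X) = L := by
    rw [inf_sup_assoc_of_le _ hSXL, hHSX, inf_top_eq]
  obtain ⟨T, -, hT, hTdisj, hTsup⟩ :=
    hpsdL.exists_projective_le_inf_of_sup_eq hSXL hL
  have := hS
  have := hT
  exact ⟨T ⊔ S, projective_sup_of_disjoint (hTdisj.mono_right le_sup_left),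
    hSX.disjoint_sup_left_of_disjoint_sup_right hTdisj, by rw [sup_assoc, hTsup]⟩

theorem isPSD_comap_subtype_of_isPSD {K L H : Submodule R M}
    (hpsdK : IsPSD R (comap K.subtype L)) (hHL : H ⊔ L = ⊤)
    (hpsdL : IsPSD R (comap L.subtype H)) : IsPSD R (comap L.subtype K) := by
  intro X hKX
  have hLX : L ⊓ K ⊔ map L.subtype X = L := by
    rwa [sup_eq_top_iff_map_subtype, map_comap_subtype] at hKX
  obtain ⟨W, hW, hWX, hWXL⟩ :=
    exists_projective_compl_of_isPSD hpsdK hHL hpsdL (map_subtype_le L X) hLX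
  have hWL : W ≤ L := hWXL ▸ le_sup_left
  have : Module.Projective R (comap L.subtype W) := .of_equiv (comapSubtypeEquivOfLe hWL).symm
  refine exists_projective_isCompl_le_of_sup_eq_top (W := comap L.subtype W) ?_ hKX
  rw [isCompl_iff_map_subtype, map_comap_subtype, inf_of_le_right hWL]
  exact ⟨hWX, hWXL⟩

end PSD

theorem stmt11 {R M : Type*} [Ring R] [AddCommGroup M] [Module R M]
    (I : Ideal R) (K L H : Submodule R M)
    (h1 : IsISupplementOf I K L) (h2 : IsISupplementOf I L H) :
    IsISupplementOf I L K := by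
  obtain ⟨hLK, hLK', hpsdK⟩ := h1
  obtain ⟨hHL, hHL', hpsdL⟩ := h2
  refine ⟨sup_comm L K ▸ hLK, ?_, isPSD_comap_subtype_of_isPSD hpsdK hHL hpsdL⟩
  calc K ⊓ L ≤ I • ⊤ ⊓ L :=
        le_inf ((inf_comm K L ▸ hLK').trans (smul_mono_right I le_top)) inf_le_right
    _ ≤ I • L := smul_top_inf_le_smul_of_sup_eq_top I hHL hHL'
end
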